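/- Let x_1,…,x_n be the bin counts of a multinomial sample of size N with probabilities p_1,…,p_n. Then E[Σ_{i=1}^{n−1}|x_{i+1}−x_i|] ≤ N·Σ_{i=1}^{n−1}|p_{i+1}−p_i| + 2√(n−1)·√N. -/

import Mathlib

open Finset

/-- Expectation of `f` of the bin counts of a multinomial sample of size `N`
with bin probabilities `p : Fin n → ℝ`. -/
noncomputable def multExp (n N : ℕ) (p : Fin n → ℝ) (f : (Fin n → ℕ) → ℝ) : ℝ :=
  ∑ x ∈ (Fintype.piFinset fun _ : Fin n => Finset.range (N + 1)).filter
      (fun x => ∑ i, x i = N),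
    (Nat.multinomial Finset.univ x : ℝ) * (∏ i, p i ^ x i) * f x

/-- Discrete total variation of a histogram with `n + 1` bins. -/
noncomputable def dtv (n : ℕ) (x : Fin (n + 1) → ℕ) : ℝ :=
  ∑ i : Fin n, |(x i.succ : ℝ) - (x i.castSucc : ℝ)|

/-!
The count `x j` of a single bin is binomial with parameters `N` and `p j`; its law is given by
the Bernstein polynomials, `(bernsteinPolynomial ℝ N k).eval t = C(N, k) tᵏ (1 - t)ᴺ⁻ᵏ`, whose
second moment identity yields the variance `N t (1 - t)`. Cauchy–Schwarz then gives
`E|x j - N p j| ≤ √(N p j)`. The triangle inequality bounds each `|x (i+1) - x i|` by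
`N |p (i+1) - p i| + |x (i+1) - N p (i+1)| + |x i - N p i|`, and the remaining sums
`∑ √(p (i+1))` and `∑ √(p i)`, each over `n` indices of a sub-probability vector, are at most `√n`
by Cauchy–Schwarz once more.
-/

theorem sum_piAntidiag_cons_multinomial_mul {ι R : Type*} [DecidableEq ι] [CommSemiring R]
    {s : Finset ι} {j : ι} (hj : j ∉ s) (p : ι → R) (g : ℕ → R) (N : ℕ) :
    ∑ x ∈ piAntidiag (s.cons j hj) N,
        (Nat.multinomial (s.cons j hj) x : R) * (∏ i ∈ s.cons j hj, p i ^ x i) * g (x j) =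
      ∑ k ∈ range (N + 1), (N.choose k : R) * p j ^ k * (∑ i ∈ s, p i) ^ (N - k) * g k := by
  rw [piAntidiag_cons, sum_disjiUnion, Nat.sum_antidiagonal_eq_sum_range_succ_mk]
  refine sum_congr rfl fun k hk => ?_
  rw [sum_map, sum_pow_eq_sum_piAntidiag, mul_sum, sum_mul]
  refine sum_congr rfl fun y hy => ?_
  obtain ⟨hy_sum, hy_supp⟩ := mem_piAntidiag.1 hy
  set x := addRightEmbedding (fun t => if t = j then k else 0) y
  have hxj : x j = k := by simp [x, by_contra fun h => hj (hy_supp j h)]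
  have hxs : ∀ i ∈ s, x i = y i := fun i hi => by simp [x, ne_of_mem_of_not_mem hi hj]
  rw [Nat.multinomial_cons, prod_cons, Nat.multinomial_congr hxs, sum_congr rfl hxs,
    prod_congr rfl fun i hi => congrArg (p i ^ ·) (hxs i hi), hxj, hy_sum,
    Nat.add_sub_cancel' (Nat.lt_succ_iff.1 (mem_range.1 hk))]
  push_cast
  ring

theorem bernsteinPolynomial_eval_nonneg {t : ℝ} (h0 : 0 ≤ t) (h1 : t ≤ 1) (N k : ℕ) :
    0 ≤ (bernsteinPolynomial ℝ N k).eval t := by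
  simp only [bernsteinPolynomial, Polynomial.eval_mul, Polynomial.eval_natCast,
    Polynomial.eval_pow, Polynomial.eval_X, Polynomial.eval_sub, Polynomial.eval_one]
  have : 0 ≤ 1 - t := sub_nonneg.2 h1
  positivity

theorem sum_bernsteinPolynomial_eval_mul_abs_sub_le {t : ℝ} (h0 : 0 ≤ t) (h1 : t ≤ 1) (N : ℕ) :
    ∑ k ∈ range (N + 1), (bernsteinPolynomial ℝ N k).eval t * |(k : ℝ) - N * t| ≤ √(N * t) := by
  set b : ℕ → ℝ := fun k => (bernsteinPolynomial ℝ N k).eval t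
  have hb : ∀ k, 0 ≤ b k := bernsteinPolynomial_eval_nonneg h0 h1 N
  have hmass : ∑ k ∈ range (N + 1), b k = 1 := by
    simpa [b, Polynomial.eval_finsetSum] using
      congrArg (Polynomial.eval t) (bernsteinPolynomial.sum ℝ N)
  have hvar : ∑ k ∈ range (N + 1), b k * ((k : ℝ) - N * t) ^ 2 = N * t * (1 - t) := by
    have h := congrArg (Polynomial.eval t) (bernsteinPolynomial.variance ℝ N)
    simp only [Polynomial.eval_finsetSum, Polynomial.eval_mul, Polynomial.eval_pow,
      Polynomial.eval_sub, Polynomial.eval_X, Polynomial.eval_natCast,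
      Polynomial.eval_one, nsmul_eq_mul] at h
    rw [← h]
    exact sum_congr rfl fun k _ => by ring
  have hcs := sum_sq_le_sum_mul_sum_of_sq_le_mul (range (N + 1))
    (r := fun k => b k * |(k : ℝ) - N * t|) (fun k _ => hb k)
    (fun k _ => mul_nonneg (hb k) (sq_nonneg ((k : ℝ) - N * t)))
    (fun k _ => by rw [mul_pow, sq_abs, sq (b k), mul_assoc])
  rw [hmass, one_mul, hvar] at hcs
  refine (le_abs_self _).trans (Real.abs_le_sqrt (hcs.trans ?_))
  have : 0 ≤ (N : ℝ) * t := by positivity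
  nlinarith

section

variable {m N : ℕ} (p : Fin m → ℝ)

theorem multExp_eq_sum_piAntidiag (f : (Fin m → ℕ) → ℝ) :
    multExp m N p f =
      ∑ x ∈ piAntidiag univ N, (Nat.multinomial univ x : ℝ) * (∏ i, p i ^ x i) * f x := by
  refine sum_congr (ext fun x => ?_) fun _ _ => rfl
  simp only [mem_filter, Fintype.mem_piFinset, mem_range, Nat.lt_succ_iff, mem_piAntidiag,
    mem_univ, implies_true, and_true, and_iff_right_iff_imp]
  exact fun h i => h ▸ single_le_sum (fun j _ => Nat.zero_le (x j)) (mem_univ i)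

theorem multExp_mono (hp : ∀ i, 0 ≤ p i) {f g : (Fin m → ℕ) → ℝ} (hfg : ∀ x, f x ≤ g x) :
    multExp m N p f ≤ multExp m N p g :=
  sum_le_sum fun x _ => mul_le_mul_of_nonneg_left (hfg x)
    (mul_nonneg (Nat.cast_nonneg _) (prod_nonneg fun i _ => pow_nonneg (hp i) _))

theorem multExp_add (f g : (Fin m → ℕ) → ℝ) :
    multExp m N p (fun x => f x + g x) = multExp m N p f + multExp m N p g := by
  simp only [multExp, mul_add, sum_add_distrib]

theorem multExp_sum {κ : Type*} (s : Finset κ) (f : κ → (Fin m → ℕ) → ℝ) :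
    multExp m N p (fun x => ∑ i ∈ s, f i x) = ∑ i ∈ s, multExp m N p (f i) := by
  simp only [multExp, mul_sum]
  exact sum_comm

theorem multExp_const (hsum : ∑ i, p i = 1) (c : ℝ) : multExp m N p (fun _ => c) = c := by
  rw [multExp_eq_sum_piAntidiag, ← sum_mul, ← sum_pow_eq_sum_piAntidiag, hsum, one_pow, one_mul]

theorem multExp_comp_eq_sum_bernsteinPolynomial (hsum : ∑ i, p i = 1) (g : ℕ → ℝ)
    (j : Fin m) :
    multExp m N p (fun x => g (x j)) =
      ∑ k ∈ range (N + 1), (bernsteinPolynomial ℝ N k).eval (p j) * g k := by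
  have huniv : (univ.erase j).cons j (notMem_erase j univ) = univ := by
    rw [cons_eq_insert, insert_erase (mem_univ j)]
  have hrest : ∑ i ∈ univ.erase j, p i = 1 - p j := by
    rw [← hsum, ← add_sum_erase univ p (mem_univ j), add_sub_cancel_left]
  have h := sum_piAntidiag_cons_multinomial_mul (notMem_erase j univ) p g N
  rw [huniv, hrest] at h
  rw [multExp_eq_sum_piAntidiag, h]
  refine sum_congr rfl fun k _ => ?_
  simp only [bernsteinPolynomial, Polynomial.eval_mul, Polynomial.eval_natCast,
    Polynomial.eval_pow, Polynomial.eval_X, Polynomial.eval_sub, Polynomial.eval_one]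

theorem multExp_abs_sub_le (hp : ∀ i, 0 ≤ p i) (hsum : ∑ i, p i = 1) (j : Fin m) :
    multExp m N p (fun x => |(x j : ℝ) - N * p j|) ≤ √N * √(p j) := by
  have hpj : p j ≤ 1 := hsum ▸ single_le_sum (fun i _ => hp i) (mem_univ j)
  rw [multExp_comp_eq_sum_bernsteinPolynomial p hsum (fun k => |(k : ℝ) - N * p j|),
    ← Real.sqrt_mul (Nat.cast_nonneg N)]
  exact sum_bernsteinPolynomial_eval_mul_abs_sub_le (hp j) hpj N

end

theorem dtv_le_sum_abs_sub_add_sum_abs_sub {n : ℕ} (x : Fin (n + 1) → ℕ) (y : Fin (n + 1) → ℝ) :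
    dtv n x ≤ ∑ i : Fin n, |y i.succ - y i.castSucc| +
      ∑ i : Fin n, (|(x i.succ : ℝ) - y i.succ| + |(x i.castSucc : ℝ) - y i.castSucc|) := by
  rw [dtv, ← sum_add_distrib]
  refine sum_le_sum fun i _ => ?_
  have h₁ := abs_sub_le (x i.succ : ℝ) (y i.succ) (x i.castSucc)
  have h₂ := abs_sub_le (y i.succ) (y i.castSucc) (x i.castSucc)
  rw [abs_sub_comm (y i.castSucc)] at h₂
  linarith

theorem sum_sqrt_le_sqrt_card {ι : Type*} (s : Finset ι) {f : ι → ℝ} (hf : ∀ i, 0 ≤ f i)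
    (h : ∑ i ∈ s, f i ≤ 1) : ∑ i ∈ s, √(f i) ≤ √(#s) := by
  have := Real.sum_sqrt_mul_sqrt_le s (f := fun _ => 1) (fun _ => zero_le_one) hf
  simp only [Real.sqrt_one, one_mul, sum_const, nsmul_eq_mul, mul_one] at this
  exact this.trans (mul_le_of_le_one_right (Real.sqrt_nonneg _) (Real.sqrt_le_one.2 h))

theorem sum_sqrt_succ_add_sqrt_castSucc_le {n : ℕ} (p : Fin (n + 1) → ℝ) (hp : ∀ i, 0 ≤ p i)
    (hsum : ∑ i, p i = 1) : ∑ i : Fin n, (√(p i.succ) + √(p i.castSucc)) ≤ 2 * √n := by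
  have hsucc : ∑ i : Fin n, √(p i.succ) ≤ √n := by
    simpa using sum_sqrt_le_sqrt_card univ (fun i : Fin n => hp i.succ)
      (by linarith [Fin.sum_univ_succ p, hp 0])
  have hcast : ∑ i : Fin n, √(p i.castSucc) ≤ √n := by
    simpa using sum_sqrt_le_sqrt_card univ (fun i : Fin n => hp i.castSucc)
      (by linarith [Fin.sum_univ_castSucc p, hp (Fin.last n)])
  rw [sum_add_distrib]
  linarith

theorem multinomial_dtv_upper_bound (n N : ℕ) (p : Fin (n + 1) → ℝ)
    (hp : ∀ i, 0 ≤ p i) (hsum : ∑ i, p i = 1) :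
    multExp (n + 1) N p (dtv n) ≤
      (N : ℝ) * (∑ i : Fin n, |p i.succ - p i.castSucc|) +
        2 * Real.sqrt (n : ℝ) * Real.sqrt (N : ℝ) := by
  have hdev (j : Fin (n + 1)) := multExp_abs_sub_le (N := N) p hp hsum j
  calc multExp (n + 1) N p (dtv n)
      ≤ multExp (n + 1) N p fun x => ∑ i : Fin n, |N * p i.succ - N * p i.castSucc| +
          ∑ i : Fin n, (|(x i.succ : ℝ) - N * p i.succ| +
            |(x i.castSucc : ℝ) - N * p i.castSucc|) :=
        multExp_mono p hp fun x => dtv_le_sum_abs_sub_add_sum_abs_sub x fun i => N * p i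
    _ = N * ∑ i : Fin n, |p i.succ - p i.castSucc| +
          ∑ i : Fin n, (multExp (n + 1) N p (fun x => |(x i.succ : ℝ) - N * p i.succ|) +
            multExp (n + 1) N p (fun x => |(x i.castSucc : ℝ) - N * p i.castSucc|)) := by
        simp only [multExp_add, multExp_const p hsum, multExp_sum, ← mul_sub, abs_mul,
          Nat.abs_cast, mul_sum]
    _ ≤ N * ∑ i : Fin n, |p i.succ - p i.castSucc| +
          √N * ∑ i : Fin n, (√(p i.succ) + √(p i.castSucc)) := by
        gcongr _ + ?_
        rw [mul_sum]
        gcongr with i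
        rw [mul_add]
        exact add_le_add (hdev _) (hdev _)
    _ ≤ _ := by
        nlinarith [Real.sqrt_nonneg (N : ℝ), sum_sqrt_succ_add_sqrt_castSucc_le p hp hsum]
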